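/- arXiv:0907.5492 — 10 statements merged into one kernel-verified Lean document; each statement's English description precedes it below -/
import Mathlib

section
/- The support Σ_T is an isotropic subspace of V if and only if T X ∘ T Y = 0 (composition of endomorphisms) for all X, Y ∈ V. -/
/-- The support Σ_T is an isotropic subspace of V if and only if
`T X ∘ T Y = 0` for all `X, Y ∈ V`. -/
theorem support_isotropic_iff_comp_zero
    {V : Type*} [AddCommGroup V] [Module ℝ V] [FiniteDimensional ℝ V]
    (B : V →ₗ[ℝ] V →ₗ[ℝ] ℝ)
    (hBsymm : ∀ x y : V, B x y = B y x)
    (hBnd : ∀ x : V, (∀ y : V, B x y = 0) → x = 0)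
    (T : V →ₗ[ℝ] V →ₗ[ℝ] V)
    (halt₁ : ∀ X Y Z : V, B (T X Y) Z = - B (T Y X) Z)
    (halt₂ : ∀ X Y Z : V, B (T X Y) Z = - B (T X Z) Y)
    (halt₃ : ∀ X Y Z : V, B (T X Y) Z = - B (T Z Y) X) :
    (∀ u ∈ Submodule.span ℝ {w : V | ∃ X Y : V, T X Y = w},
      ∀ v ∈ Submodule.span ℝ {w : V | ∃ X Y : V, T X Y = w}, B u v = 0)
      ↔ (∀ X Y : V, (T X) ∘ₗ (T Y) = 0) := by
  constructor
  · intro h X Y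
    ext Z
    simp only [LinearMap.comp_apply, LinearMap.zero_apply]
    apply hBnd
    intro w
    have h1 : B (T X (T Y Z)) w = - B (T X w) (T Y Z) := halt₂ X (T Y Z) w
    rw [h1, h (T X w) (Submodule.subset_span ⟨X, w, rfl⟩)
      (T Y Z) (Submodule.subset_span ⟨Y, Z, rfl⟩), neg_zero]
  · intro h u hu v hv
    induction hu using Submodule.span_induction with
    | mem x hx =>
      obtain ⟨X, Y, rfl⟩ := hx
      induction hv using Submodule.span_induction with
      | mem y hy =>
        obtain ⟨Z, W, rfl⟩ := hy
        have h1 : B (T X Y) (T Z W) = - B (T X (T Z W)) Y := halt₂ X Y (T Z W)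
        have h2 : T X (T Z W) = 0 := by
          have := congrFun (congrArg DFunLike.coe (h X Z)) W
          simpa using this
        rw [h1, h2]; simp
      | zero => simp
      | add a b _ _ ha hb => simp [ha, hb]
      | smul c a _ ha => simp [ha]
    | zero => simp
    | add a b _ _ ha hb => simp [ha, hb]
    | smul c a _ ha => simp [ha]
end

section
/- Assume the support Σ_T is isotropic. Then: (a) the operation X * Y := X + Y + T X Y makes V into a group with identity 0 in which the inverse of X is −X; (b) for each X the affine map g_X : V → V, g_X(v) := v + T X v + X, satisfies g_X ∘ g_Y = g_{X*Y}, so X ↦ g_X is an injective group homomorphism from (V,*) into the group of affine bijections of V; (c) each linear part id + T X is an isometry of B, i.e. B((id + T X)u, (id + T X)v) = B(u,v) for all u, v ∈ V. -/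
/-- If the support `Σ_T` is isotropic, then
(a) `X * Y := X + Y + T X Y` makes `V` a group with identity `0` and inverse `-X`;
(b) the affine maps `g_X(v) := v + T X v + X` satisfy `g_X ∘ g_Y = g_{X*Y}`,
    `X ↦ g_X` is injective and each `g_X` is an affine bijection;
(c) each linear part `id + T X` is an isometry of `B`. -/
theorem group_structure_of_isotropic_support
    {V : Type*} [AddCommGroup V] [Module ℝ V] [FiniteDimensional ℝ V]
    (B : V →ₗ[ℝ] V →ₗ[ℝ] ℝ)
    (hBsymm : ∀ x y : V, B x y = B y x)
    (hBnd : ∀ x : V, (∀ y : V, B x y = 0) → x = 0)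
    (T : V →ₗ[ℝ] V →ₗ[ℝ] V)
    (halt₁ : ∀ X Y Z : V, B (T X Y) Z = - B (T Y X) Z)
    (halt₂ : ∀ X Y Z : V, B (T X Y) Z = - B (T X Z) Y)
    (halt₃ : ∀ X Y Z : V, B (T X Y) Z = - B (T Z Y) X)
    (hiso : ∀ u ∈ Submodule.span ℝ {w : V | ∃ X Y : V, T X Y = w},
      ∀ v ∈ Submodule.span ℝ {w : V | ∃ X Y : V, T X Y = w}, B u v = 0) :
    let mul : V → V → V := fun X Y => X + Y + T X Y
    let g : V → V → V := fun X v => v + T X v + X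
    -- (a) group axioms
    (∀ X Y Z : V, mul (mul X Y) Z = mul X (mul Y Z)) ∧
    (∀ X : V, mul 0 X = X ∧ mul X 0 = X) ∧
    (∀ X : V, mul X (-X) = 0 ∧ mul (-X) X = 0) ∧
    -- (b) affine action, homomorphism property, injectivity and bijectivity
    (∀ X Y : V, (g X) ∘ (g Y) = g (mul X Y)) ∧
    (Function.Injective fun X : V => g X) ∧
    (∀ X : V, Function.Bijective (g X)) ∧
    -- (c) the linear parts are isometries of B
    (∀ X u v : V, B (u + T X u) (v + T X v) = B u v) := by
  intro mul g
  have hmem : ∀ X Y : V, T X Y ∈ Submodule.span ℝ {w : V | ∃ X Y : V, T X Y = w} :=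
    fun X Y => Submodule.subset_span ⟨X, Y, rfl⟩
  have hB0 : ∀ X Y Z W : V, B (T X Y) (T Z W) = 0 :=
    fun X Y Z W => hiso _ (hmem X Y) _ (hmem Z W)
  have hTXX : ∀ X : V, T X X = 0 := by
    intro X
    apply hBnd
    intro W
    have := halt₁ X X W
    linarith
  have hT1 : ∀ X Y Z : V, T X (T Y Z) = 0 := by
    intro X Y Z
    apply hBnd
    intro W
    rw [halt₂]
    simp [hB0]
  have hT2 : ∀ X Y v : V, T (T X Y) v = 0 := by
    intro X Y v
    apply hBnd
    intro W
    rw [halt₃]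
    rw [hBsymm]
    simp [hB0]
  have hmul : ∀ X Y Z : V, mul (mul X Y) Z = mul X (mul Y Z) := by
    intro X Y Z
    simp only [mul, map_add, LinearMap.add_apply, hT1, hT2]
    abel
  have hone : ∀ X : V, mul 0 X = X ∧ mul X 0 = X := by
    intro X
    constructor <;> simp [mul]
  have hinv : ∀ X : V, mul X (-X) = 0 ∧ mul (-X) X = 0 := by
    intro X
    constructor <;> simp [mul, hTXX]
  have hcomp : ∀ X Y : V, (g X) ∘ (g Y) = g (mul X Y) := by
    intro X Y
    funext v
    simp only [g, mul, Function.comp_apply, map_add, LinearMap.add_apply, hT1, hT2]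
    abel
  have hg0 : g 0 = id := by
    funext v; simp [g]
  refine ⟨hmul, hone, hinv, hcomp, ?_, ?_, ?_⟩
  · intro X Y h
    have := congrFun h 0
    simpa [g] using this
  · intro X
    have h1 : (g X) ∘ (g (-X)) = id := by
      rw [hcomp, (hinv X).1, hg0]
    have h2 : (g (-X)) ∘ (g X) = id := by
      rw [hcomp, (hinv X).2, hg0]
    exact ⟨Function.LeftInverse.injective (congrFun h2),
      Function.RightInverse.surjective (congrFun h1)⟩
  · intro X u v
    have h1 : B (T X u) v = - B (T X v) u := halt₂ X u v
    have h2 : B u (T X v) = B (T X v) u := hBsymm _ _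
    simp only [map_add, LinearMap.add_apply, hB0]
    linarith
end

section
/- Assume the support Σ_T is isotropic. Then the bracket [X,Y] := 2 T X Y makes V into a real Lie algebra (in particular the Jacobi identity holds); this Lie algebra is 2-step nilpotent, i.e. [[X,Y],Z] = 0 for all X, Y, Z; and B is invariant for it, i.e. B([X,Y],Z) = −B(Y,[X,Z]) for all X, Y, Z. -/
/-- If the support `Σ_T` is isotropic, then `[X,Y] := 2 T X Y` makes
`V` a real Lie algebra (Jacobi identity holds), which is 2-step nilpotent, and `B`
is invariant for it. -/
theorem lie_algebra_of_isotropic_support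
    {V : Type*} [AddCommGroup V] [Module ℝ V] [FiniteDimensional ℝ V]
    (B : V →ₗ[ℝ] V →ₗ[ℝ] ℝ)
    (hBsymm : ∀ x y : V, B x y = B y x)
    (hBnd : ∀ x : V, (∀ y : V, B x y = 0) → x = 0)
    (T : V →ₗ[ℝ] V →ₗ[ℝ] V)
    (halt₁ : ∀ X Y Z : V, B (T X Y) Z = - B (T Y X) Z)
    (halt₂ : ∀ X Y Z : V, B (T X Y) Z = - B (T X Z) Y)
    (halt₃ : ∀ X Y Z : V, B (T X Y) Z = - B (T Z Y) X)
    (hiso : ∀ u ∈ Submodule.span ℝ {w : V | ∃ X Y : V, T X Y = w},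
      ∀ v ∈ Submodule.span ℝ {w : V | ∃ X Y : V, T X Y = w}, B u v = 0) :
    let br : V → V → V := fun X Y => (2 : ℝ) • T X Y
    -- alternating
    (∀ X : V, br X X = 0) ∧
    -- Jacobi identity
    (∀ X Y Z : V, br (br X Y) Z + br (br Y Z) X + br (br Z X) Y = 0) ∧
    -- 2-step nilpotent
    (∀ X Y Z : V, br (br X Y) Z = 0) ∧
    -- invariance of B
    (∀ X Y Z : V, B (br X Y) Z = - B Y (br X Z)) := by
  intro br
  have hmem : ∀ X Y : V, T X Y ∈ Submodule.span ℝ {w : V | ∃ X Y : V, T X Y = w} :=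
    fun X Y => Submodule.subset_span ⟨X, Y, rfl⟩
  have hTT : ∀ X Y Z : V, T (T X Y) Z = 0 := by
    intro X Y Z
    apply hBnd
    intro w
    have h1 : B (T (T X Y) Z) w = - B (T w Z) (T X Y) := by
      rw [halt₃]
    rw [h1, hiso _ (hmem w Z) _ (hmem X Y), neg_zero]
  have hTXX : ∀ X : V, T X X = 0 := by
    intro X
    apply hBnd
    intro w
    have := halt₁ X X w
    linarith
  have hnil : ∀ X Y Z : V, br (br X Y) Z = 0 := by
    intro X Y Z
    show (2:ℝ) • T ((2:ℝ) • T X Y) Z = 0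
    rw [map_smul, LinearMap.smul_apply, hTT, smul_zero, smul_zero]
  refine ⟨?_, ?_, hnil, ?_⟩
  · intro X
    show (2:ℝ) • T X X = 0
    rw [hTXX, smul_zero]
  · intro X Y Z
    rw [hnil, hnil, hnil, add_zero, add_zero]
  · intro X Y Z
    show B ((2:ℝ) • T X Y) Z = - B Y ((2:ℝ) • T X Z)
    rw [map_smul, LinearMap.smul_apply, map_smul]
    rw [show B (T X Y) Z = - B (T X Z) Y from halt₂ X Y Z, hBsymm]
    simp [smul_neg]
end

section
/- Assume the support Σ_T is isotropic, and let g_Y(v) := v + T Y v + Y be the left translations. An affine transformation φ(x) = A x + v of V, with A an invertible linear map, commutes with g_Y for every Y ∈ V if and only if A = id − T v; in that case φ(x) = x + v + T x v for all x, i.e. φ is the right translation x ↦ x * v for the group operation X * Y := X + Y + T X Y. In other words, the centralizer of the left translations inside the affine group consists exactly of the right translations. -/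
/-- Assume the support `Σ_T` is isotropic and let `g_Y(v) := v + T Y v + Y`.
An affine transformation `φ(x) = A x + v` (with `A` invertible linear) commutes with
every `g_Y` iff `A = id − T v`; in that case `φ(x) = x + v + T x v`, i.e. `φ` is the
right translation `x ↦ x * v` for `X * Y := X + Y + T X Y`. -/
theorem centralizer_of_left_translations
    {V : Type*} [AddCommGroup V] [Module ℝ V] [FiniteDimensional ℝ V]
    (B : V →ₗ[ℝ] V →ₗ[ℝ] ℝ)
    (hBsymm : ∀ x y : V, B x y = B y x)
    (hBnd : ∀ x : V, (∀ y : V, B x y = 0) → x = 0)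
    (T : V →ₗ[ℝ] V →ₗ[ℝ] V)
    (halt₁ : ∀ X Y Z : V, B (T X Y) Z = - B (T Y X) Z)
    (halt₂ : ∀ X Y Z : V, B (T X Y) Z = - B (T X Z) Y)
    (halt₃ : ∀ X Y Z : V, B (T X Y) Z = - B (T Z Y) X)
    (hiso : ∀ u ∈ Submodule.span ℝ {w : V | ∃ X Y : V, T X Y = w},
      ∀ v ∈ Submodule.span ℝ {w : V | ∃ X Y : V, T X Y = w}, B u v = 0)
    (A : V ≃ₗ[ℝ] V) (v : V) :
    let g : V → V → V := fun Y x => x + T Y x + Y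
    -- φ = (A, v) commutes with every left translation iff A = id - T v
    ((∀ Y x : V, A (g Y x) + v = g Y (A x + v)) ↔ (∀ x : V, A x = x - T v x)) ∧
    -- in that case φ is the right translation x ↦ x * v = x + v + T x v
    ((∀ x : V, A x = x - T v x) → ∀ x : V, A x + v = x + v + T x v) := by
  intro g
  have hmem : ∀ X Y : V, T X Y ∈ Submodule.span ℝ {w : V | ∃ X Y : V, T X Y = w} := by
    intro X Y
    exact Submodule.subset_span ⟨X, Y, rfl⟩
  -- antisymmetry of T
  have hanti : ∀ X Y : V, T X Y = - T Y X := by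
    intro X Y
    have h : T X Y + T Y X = 0 := by
      apply hBnd
      intro Z
      have h1 := halt₁ X Y Z
      have : (B (T X Y + T Y X)) Z = B (T X Y) Z + B (T Y X) Z := by
        simp [map_add]
      rw [this, h1]; ring
    exact eq_neg_of_add_eq_zero_left h
  -- T u (T a b) = 0
  have hzero : ∀ u a b : V, T u (T a b) = 0 := by
    intro u a b
    apply hBnd
    intro Z
    have h2 := halt₂ u (T a b) Z
    rw [h2, hiso _ (hmem u Z) _ (hmem a b)]
    ring
  constructor
  · constructor
    · intro h x
      have hx := h x 0
      simp only [g, map_zero, map_add, zero_add, add_zero] at hx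
      -- hx : A x + v = v + T x v + x
      have : A x = T x v + x := by
        linear_combination (norm := abel) hx
      rw [this, hanti x v]
      abel
    · intro h Y x
      simp only [g, map_add]
      rw [h x, h (T Y x), h Y]
      have h1 : T v (T Y x) = 0 := hzero v Y x
      have h2 : T Y (T v x) = 0 := hzero Y v x
      have h3 : T v Y = - T Y v := hanti v Y
      simp only [map_sub, h1, h2, h3]
      abel
  · intro h x
    rw [h x, hanti x v]
    abel
end

section
/- Assume the support Σ_T is isotropic. Then in the Lie algebra on V defined by [X,Y] := 2 T X Y, the subspace 𝔞 := {X ∈ V : T X = 0} = Σ_T^⊥ is an abelian ideal (i.e. [X, a] ∈ 𝔞 for all X ∈ V, a ∈ 𝔞, and [a, b] = 0 for a, b ∈ 𝔞) whose dimension satisfies dim 𝔞 ≥ (dim V)/2. -/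
/-!
Cyclic skew-symmetry `B (T X Y) Z = - B (T Z Y) X` moves `X` out of the first slot of `T`, so
with `B` nondegenerate, `T X = 0` exactly when `X` is orthogonal to every value of `T`: the
kernel of `T` is the orthogonal complement of the support `Σ_T`. If `Σ_T` is isotropic it thus
lies in this kernel, which makes the kernel an ideal, and `dim Σ_T + dim Σ_T^⊥ = dim V` with
`dim Σ_T ≤ dim Σ_T^⊥` gives the dimension bound.
-/

open Module

namespace LinearMap.BilinForm

variable {K V : Type*} [Field K] [AddCommGroup V] [Module K V] [FiniteDimensional K V]

theorem finrank_le_two_mul_finrank_orthogonal {B : LinearMap.BilinForm K V}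
    (hB : B.Nondegenerate) {W : Submodule K V} (hW : W ≤ B.orthogonal W) :
    finrank K V ≤ 2 * finrank K (B.orthogonal W) := by
  have hcompl := finrank_orthogonal hB W
  have hmono := Submodule.finrank_mono hW
  have hle := Submodule.finrank_le W
  omega

end LinearMap.BilinForm

section Support

variable {R M : Type*} [CommRing R] [AddCommGroup M] [Module R M]

/-- The support `Σ_T` of a bilinear map `T`. -/
def supportSpan (T : M →ₗ[R] M →ₗ[R] M) : Submodule R M :=
  Submodule.span R {w | ∃ X Y : M, T X Y = w}

theorem apply_mem_supportSpan (T : M →ₗ[R] M →ₗ[R] M) (X Y : M) : T X Y ∈ supportSpan T :=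
  Submodule.subset_span ⟨X, Y, rfl⟩

theorem ker_eq_orthogonal_supportSpan (B : LinearMap.BilinForm R M) (T : M →ₗ[R] M →ₗ[R] M)
    (hcyc : ∀ X Y Z : M, B (T X Y) Z = - B (T Z Y) X)
    (hB : ∀ x : M, (∀ y : M, B x y = 0) → x = 0) :
    LinearMap.ker T = B.orthogonal (supportSpan T) := by
  ext X
  constructor
  · intro hX w hw
    refine (Submodule.span_le (p := LinearMap.ker (B.flip X))).mpr ?_ hw
    rintro _ ⟨Y, Z, rfl⟩
    simp [hcyc, LinearMap.mem_ker.mp hX]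
  · intro hX
    refine LinearMap.ext fun Y => hB _ fun Z => ?_
    rw [hcyc, hX _ (apply_mem_supportSpan T Z Y), neg_zero]

end Support

theorem kernel_is_large_abelian_ideal_general
    {V : Type*} [AddCommGroup V] [Module ℝ V] [FiniteDimensional ℝ V]
    (B : V →ₗ[ℝ] V →ₗ[ℝ] ℝ)
    (hBsymm : ∀ x y : V, B x y = B y x)
    (hBnd : ∀ x : V, (∀ y : V, B x y = 0) → x = 0)
    (T : V →ₗ[ℝ] V →ₗ[ℝ] V)
    (halt₃ : ∀ X Y Z : V, B (T X Y) Z = - B (T Z Y) X)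
    (hiso : ∀ u ∈ Submodule.span ℝ {w : V | ∃ X Y : V, T X Y = w},
      ∀ v ∈ Submodule.span ℝ {w : V | ∃ X Y : V, T X Y = w}, B u v = 0) :
    -- 𝔞 = ker T equals the orthogonal complement of the support
    (∀ X : V, X ∈ LinearMap.ker T ↔
      (∀ w ∈ Submodule.span ℝ {w : V | ∃ X Y : V, T X Y = w}, B X w = 0)) ∧
    -- 𝔞 is an ideal: [X, a] ∈ 𝔞 for all X ∈ V, a ∈ 𝔞
    (∀ X : V, ∀ a ∈ LinearMap.ker T, (2 : ℝ) • T X a ∈ LinearMap.ker T) ∧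
    -- 𝔞 is abelian: [a, b] = 0 for a, b ∈ 𝔞
    (∀ a ∈ LinearMap.ker T, ∀ b ∈ LinearMap.ker T, (2 : ℝ) • T a b = 0) ∧
    -- dim 𝔞 ≥ (dim V)/2
    (Module.finrank ℝ V ≤ 2 * Module.finrank ℝ ↥(LinearMap.ker T)) := by
  have hker := ker_eq_orthogonal_supportSpan B T halt₃ hBnd
  have hisotropic : supportSpan T ≤ LinearMap.BilinForm.orthogonal B (supportSpan T) :=
    fun v hv u hu => hiso u hu v hv
  have hnondeg : B.Nondegenerate :=
    (LinearMap.IsRefl.nondegenerate_iff_separatingLeft fun x y h => hBsymm x y ▸ h).mpr hBnd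
  refine ⟨fun X => ?_, fun X a _ => ?_, fun a ha b _ => ?_, ?_⟩
  · rw [hker]
    exact forall₂_congr fun w _ => by rw [hBsymm]
  · exact Submodule.smul_mem _ _ (hker ▸ hisotropic (apply_mem_supportSpan T X a))
  · rw [LinearMap.mem_ker.mp ha, LinearMap.zero_apply, smul_zero]
  · rw [hker]
    exact LinearMap.BilinForm.finrank_le_two_mul_finrank_orthogonal hnondeg hisotropic

/-- Assume the support `Σ_T` is isotropic. In the Lie algebra on `V`
with `[X,Y] := 2 T X Y`, the subspace `𝔞 := ker T = Σ_T^⊥` is an abelian ideal of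
dimension at least `(dim V)/2`. -/
theorem kernel_is_large_abelian_ideal
    {V : Type*} [AddCommGroup V] [Module ℝ V] [FiniteDimensional ℝ V]
    (B : V →ₗ[ℝ] V →ₗ[ℝ] ℝ)
    (hBsymm : ∀ x y : V, B x y = B y x)
    (hBnd : ∀ x : V, (∀ y : V, B x y = 0) → x = 0)
    (T : V →ₗ[ℝ] V →ₗ[ℝ] V)
    (halt₁ : ∀ X Y Z : V, B (T X Y) Z = - B (T Y X) Z)
    (halt₂ : ∀ X Y Z : V, B (T X Y) Z = - B (T X Z) Y)
    (halt₃ : ∀ X Y Z : V, B (T X Y) Z = - B (T Z Y) X)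
    (hiso : ∀ u ∈ Submodule.span ℝ {w : V | ∃ X Y : V, T X Y = w},
      ∀ v ∈ Submodule.span ℝ {w : V | ∃ X Y : V, T X Y = w}, B u v = 0) :
    -- 𝔞 = ker T equals the orthogonal complement of the support
    (∀ X : V, X ∈ LinearMap.ker T ↔
      (∀ w ∈ Submodule.span ℝ {w : V | ∃ X Y : V, T X Y = w}, B X w = 0)) ∧
    -- 𝔞 is an ideal: [X, a] ∈ 𝔞 for all X ∈ V, a ∈ 𝔞
    (∀ X : V, ∀ a ∈ LinearMap.ker T, (2 : ℝ) • T X a ∈ LinearMap.ker T) ∧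
    -- 𝔞 is abelian: [a, b] = 0 for a, b ∈ 𝔞
    (∀ a ∈ LinearMap.ker T, ∀ b ∈ LinearMap.ker T, (2 : ℝ) • T a b = 0) ∧
    -- dim 𝔞 ≥ (dim V)/2
    (Module.finrank ℝ V ≤ 2 * Module.finrank ℝ ↥(LinearMap.ker T)) :=
  kernel_is_large_abelian_ideal_general B hBsymm hBnd T halt₃ hiso
end

section
/- If T ≠ 0, then the support Σ_T has dimension at least 3; if moreover Σ_T is isotropic, then dim V ≥ 6. (In particular there are no nonzero alternating 3-forms with isotropic support on spaces of dimension less than 6, which is the algebraic content of the nonexistence of strict flat nearly para-Kähler manifolds of dimension less than 6.) -/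
/-- If `T ≠ 0`, then the support `Sig_T` has dimension at least 3; if
moreover `Sig_T` is isotropic, then `dim V ≥ 6`. (In particular there are no nonzero
alternating 3-forms with isotropic support in dimension less than 6.) -/
theorem support_dim_ge_three_of_ne_zero
    {V : Type*} [AddCommGroup V] [Module ℝ V] [FiniteDimensional ℝ V]
    (B : V →ₗ[ℝ] V →ₗ[ℝ] ℝ)
    (hBsymm : ∀ x y : V, B x y = B y x)
    (hBnd : ∀ x : V, (∀ y : V, B x y = 0) → x = 0)
    (T : V →ₗ[ℝ] V →ₗ[ℝ] V)
    (halt₁ : ∀ X Y Z : V, B (T X Y) Z = - B (T Y X) Z)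
    (halt₂ : ∀ X Y Z : V, B (T X Y) Z = - B (T X Z) Y)
    (halt₃ : ∀ X Y Z : V, B (T X Y) Z = - B (T Z Y) X)
    (hT : T ≠ 0) :
    3 ≤ Module.finrank ℝ ↥(Submodule.span ℝ {w : V | ∃ X Y : V, T X Y = w}) ∧
    ((∀ u ∈ Submodule.span ℝ {w : V | ∃ X Y : V, T X Y = w},
        ∀ v ∈ Submodule.span ℝ {w : V | ∃ X Y : V, T X Y = w}, B u v = 0) →
      6 ≤ Module.finrank ℝ V) := by
  classical
  set S : Set V := {w : V | ∃ X Y : V, T X Y = w} with hS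
  set Sig := Submodule.span ℝ S with hSig
  -- find X, Y with T X Y ≠ 0
  obtain ⟨X, Y, hXY⟩ : ∃ X Y : V, T X Y ≠ 0 := by
    by_contra h
    push_neg at h
    exact hT (by ext X Y; simp [h X Y])
  obtain ⟨Z, hη⟩ : ∃ Z : V, B (T X Y) Z ≠ 0 := by
    by_contra h
    push_neg at h
    exact hXY (hBnd _ h)
  set a := T X Y with ha
  set b := T Y Z with hb
  set c := T Z X with hc
  set η := B a Z with hηdef
  -- pairing table
  have haX : B a X = 0 := by have := halt₃ X Y X; linarith
  have haY : B a Y = 0 := by have := halt₂ X Y Y; linarith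
  have hbY : B b Y = 0 := by have := halt₃ Y Z Y; linarith
  have hbZ : B b Z = 0 := by have := halt₂ Y Z Z; linarith
  have hcX : B c X = 0 := by have := halt₂ Z X X; linarith
  have hcZ : B c Z = 0 := by have := halt₃ Z X Z; linarith
  have hcY : B c Y = η := by
    have h1 := halt₃ Z X Y
    have h2 := halt₁ Y X Z
    simp only [← ha, ← hc, ← hηdef] at *
    linarith
  have hbX : B b X = η := by
    have h1 := halt₃ Y Z X
    have h2 := halt₁ X Z Y
    have h3 := halt₃ Z X Y
    have h4 := halt₁ Y X Z
    simp only [← ha, ← hb, ← hc, ← hηdef] at *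
    linarith
  -- membership in Sig
  have haSig : a ∈ Sig := Submodule.subset_span ⟨X, Y, rfl⟩
  have hbSig : b ∈ Sig := Submodule.subset_span ⟨Y, Z, rfl⟩
  have hcSig : c ∈ Sig := Submodule.subset_span ⟨Z, X, rfl⟩
  -- linear independence of a, b, c
  have habc : ∀ α β γ : ℝ, α • a + β • b + γ • c = 0 → α = 0 ∧ β = 0 ∧ γ = 0 := by
    intro α β γ h
    have pZ : α * B a Z + β * B b Z + γ * B c Z = 0 := by
      have := congrArg (fun v => B v Z) h
      simpa using this
    have pX : α * B a X + β * B b X + γ * B c X = 0 := by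
      have := congrArg (fun v => B v X) h
      simpa using this
    have pY : α * B a Y + β * B b Y + γ * B c Y = 0 := by
      have := congrArg (fun v => B v Y) h
      simpa using this
    rw [haX, hbX, hcX] at pX
    rw [haY, hbY, hcY] at pY
    rw [← hηdef, hbZ, hcZ] at pZ
    refine ⟨?_, ?_, ?_⟩
    · have : α * η = 0 := by linarith
      exact (mul_eq_zero.mp this).resolve_right hη
    · have : β * η = 0 := by linarith
      exact (mul_eq_zero.mp this).resolve_right hη
    · have : γ * η = 0 := by linarith
      exact (mul_eq_zero.mp this).resolve_right hη
  constructor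
  · -- dim Sig ≥ 3
    set f : Fin 3 → Sig := ![⟨a, haSig⟩, ⟨b, hbSig⟩, ⟨c, hcSig⟩] with hf
    have hli : LinearIndependent ℝ f := by
      rw [Fintype.linearIndependent_iff]
      intro g hg
      have hg' : g 0 • a + g 1 • b + g 2 • c = 0 := by
        have := congrArg (Submodule.subtype Sig) hg
        simpa [hf, Fin.sum_univ_three, f] using this
      obtain ⟨h0, h1, h2⟩ := habc _ _ _ hg'
      intro i
      fin_cases i <;> assumption
    have := hli.fintype_card_le_finrank
    simpa using this
  · -- dim V ≥ 6 when Sig isotropic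
    intro hiso
    set f : Fin 6 → V := ![a, b, c, X, Y, Z] with hf
    have hli : LinearIndependent ℝ f := by
      rw [Fintype.linearIndependent_iff]
      intro g hg
      have hg' : g 0 • a + g 1 • b + g 2 • c + g 3 • X + g 4 • Y + g 5 • Z = 0 := by
        simpa [hf, Fin.sum_univ_six, f, add_assoc] using hg
      -- pair with a, b, c to kill X, Y, Z coefficients
      have pa : g 5 * η = 0 := by
        have := congrArg (fun v => B v a) hg'
        have hXa : B X a = 0 := by rw [← hBsymm]; exact haX
        have hYa : B Y a = 0 := by rw [← hBsymm]; exact haY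
        have hZa : B Z a = η := by rw [← hBsymm]
        simpa [hiso a haSig a haSig, hiso b hbSig a haSig, hiso c hcSig a haSig,
          hXa, hYa, hZa, hBsymm] using this
      have pb : g 3 * η = 0 := by
        have := congrArg (fun v => B v b) hg'
        have hXb : B X b = η := by rw [← hBsymm]; exact hbX
        have hYb : B Y b = 0 := by rw [← hBsymm]; exact hbY
        have hZb : B Z b = 0 := by rw [← hBsymm]; exact hbZ
        simpa [hiso a haSig b hbSig, hiso b hbSig b hbSig, hiso c hcSig b hbSig,
          hXb, hYb, hZb] using this
      have pc : g 4 * η = 0 := by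
        have := congrArg (fun v => B v c) hg'
        have hXc : B X c = 0 := by rw [← hBsymm]; exact hcX
        have hYc : B Y c = η := by rw [← hBsymm]; exact hcY
        have hZc : B Z c = 0 := by rw [← hBsymm]; exact hcZ
        simpa [hiso a haSig c hcSig, hiso b hbSig c hcSig, hiso c hcSig c hcSig,
          hXc, hYc, hZc] using this
      have h3 : g 3 = 0 := (mul_eq_zero.mp pb).resolve_right hη
      have h4 : g 4 = 0 := (mul_eq_zero.mp pc).resolve_right hη
      have h5 : g 5 = 0 := (mul_eq_zero.mp pa).resolve_right hη
      rw [h3, h4, h5] at hg'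
      simp only [zero_smul, add_zero] at hg'
      obtain ⟨h0, h1, h2⟩ := habc _ _ _ hg'
      intro i
      fin_cases i <;> assumption
    have := hli.fintype_card_le_finrank
    simpa using this
end

section
/- Let τ be a para-complex structure compatible with B. Then T X ∘ τ + τ ∘ T X = 0 for all X ∈ V if and only if η(X,Y,Z) = 0 whenever τX = X and τY = −Y; that is, the anticommutation condition holds exactly when η vanishes whenever two of its arguments are eigenvectors of τ for opposite eigenvalues (η is of type (3,0)+(0,3)). -/
/-- For a para-complex structure `τ` compatible with `B`:
`T X ∘ τ + τ ∘ T X = 0` for all `X` iff `η(X,Y,Z) = 0` whenever `τX = X` and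
`τY = −Y` (i.e. `η` is of type (3,0)+(0,3)). -/
theorem anticommute_iff_vanishing_on_mixed_eigenvectors
    {V : Type*} [AddCommGroup V] [Module ℝ V] [FiniteDimensional ℝ V]
    (B : V →ₗ[ℝ] V →ₗ[ℝ] ℝ)
    (hBsymm : ∀ x y : V, B x y = B y x)
    (hBnd : ∀ x : V, (∀ y : V, B x y = 0) → x = 0)
    (T : V →ₗ[ℝ] V →ₗ[ℝ] V)
    (halt₁ : ∀ X Y Z : V, B (T X Y) Z = - B (T Y X) Z)
    (halt₂ : ∀ X Y Z : V, B (T X Y) Z = - B (T X Z) Y)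
    (halt₃ : ∀ X Y Z : V, B (T X Y) Z = - B (T Z Y) X)
    (τ : V →ₗ[ℝ] V)
    (hτ2 : τ ∘ₗ τ = LinearMap.id)
    (hτB : ∀ x y : V, B (τ x) (τ y) = - B x y) :
    (∀ X : V, (T X) ∘ₗ τ + τ ∘ₗ (T X) = 0) ↔
      (∀ X Y Z : V, τ X = X → τ Y = -Y → B (T X Y) Z = 0) := by
  have ht : ∀ v : V, τ (τ v) = v := fun v => by
    have := LinearMap.ext_iff.mp hτ2 v
    simpa using this
  constructor
  · intro h X Y Z hX hY
    have hZ' := LinearMap.ext_iff.mp (h Z) Y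
    simp only [LinearMap.add_apply, LinearMap.comp_apply, LinearMap.zero_apply] at hZ'
    rw [hY, map_neg, neg_add_eq_zero] at hZ'
    -- hZ' : T Z Y = τ (T Z Y)
    have h0 : B (T Z Y) X = 0 := by
      have := hτB (T Z Y) X
      rw [← hZ', hX] at this
      linarith
    rw [halt₃, h0, neg_zero]
  · intro h X
    -- mixed-eigenvector vanishing in all argument positions
    have h4 : ∀ a b c : V, τ b = b → τ c = -c → B (T a b) c = 0 := by
      intro a b c hb hc
      rw [halt₁, halt₂ b a c, h b c a hb hc, neg_zero, neg_zero]
    have h6 : ∀ a b c : V, τ b = -b → τ c = c → B (T a b) c = 0 := by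
      intro a b c hb hc
      rw [halt₂, h4 a c b hc hb, neg_zero]
    have key : ∀ a b c : V, (τ b = b ∨ τ b = -b) → (τ c = c ∨ τ c = -c) →
        B (T a (τ b)) c = B (T a b) (τ c) := by
      intro a b c hb hc
      rcases hb with hb | hb <;> rcases hc with hc | hc
      · rw [hb, hc]
      · simp [hb, hc, h4 a b c hb hc]
      · simp [hb, hc, h6 a b c hb hc]
      · simp [hb, hc]
    have decomp : ∀ v : V, ∃ p q : V, v = p + q ∧ τ p = p ∧ τ q = -q := by
      intro v
      refine ⟨(1/2 : ℝ) • (v + τ v), (1/2 : ℝ) • (v - τ v), ?_, ?_, ?_⟩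
      · rw [← smul_add]
        have : v + τ v + (v - τ v) = (2 : ℝ) • v := by
          rw [two_smul]; abel
        rw [this, smul_smul]; norm_num
      · rw [map_smul, map_add, ht]
        rw [add_comm]
      · rw [map_smul, map_sub, ht, ← smul_neg]
        congr 1
        abel
    have main : ∀ a b c : V, B (T a (τ b)) c = B (T a b) (τ c) := by
      intro a b c
      obtain ⟨p, q, hb, hp, hq⟩ := decomp b
      obtain ⟨r, s, hc, hr, hs⟩ := decomp c
      subst hb; subst hc
      simp only [map_add, LinearMap.add_apply]
      rw [key a p r (Or.inl hp) (Or.inl hr), key a p s (Or.inl hp) (Or.inr hs),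
        key a q r (Or.inr hq) (Or.inl hr), key a q s (Or.inr hq) (Or.inr hs)]
    have hneg : ∀ u z : V, B (τ u) z = - B u (τ z) := by
      intro u z
      have := hτB u (τ z)
      rwa [ht z] at this
    apply LinearMap.ext
    intro Y
    simp only [LinearMap.add_apply, LinearMap.comp_apply, LinearMap.zero_apply]
    apply hBnd
    intro Z
    rw [map_add, LinearMap.add_apply, hneg, main X Y Z]
    ring
end

section
/- Let τ be a para-complex structure compatible with B, and assume the support Σ_T is isotropic and T X ∘ τ + τ ∘ T X = 0 for all X ∈ V. If dim V < 12, then Σ_T is contained in one of the two eigenspaces of τ: either Σ_T ⊆ {x : τx = x} or Σ_T ⊆ {x : τx = −x}. -/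
/-!
The eigenspaces `V₊`, `V₋` of `τ` are isotropic, and `T` maps `V₊ × V₊` into `V₋`, `V₋ × V₋`
into `V₊` and kills mixed pairs. If `Σ_T` lies in neither eigenspace, nondegeneracy gives
`x, y, z ∈ V₊` with `η(x, y, z) ≠ 0` and `u, w, s ∈ V₋` with `η(u, w, s) ≠ 0`. Then
`x, y, z, T u w, T w s, T s u` are six independent vectors of `V₊`: against
`T y z, T z x, T x y, s, u, w` they pair triangularly, because `η` is alternating and `Σ_T` is
isotropic. Exchanging `τ` and `-τ`, also `dim V₋ ≥ 6`, so `dim V ≥ 12`.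
-/

open Module Module.End

theorem linearIndependent_of_det_apply_ne_zero {R M ι : Type*} [CommRing R] [IsDomain R]
    [AddCommGroup M] [Module R M] [Fintype ι] [DecidableEq ι] {v : ι → M} (φ : ι → Dual R M)
    (h : (Matrix.of fun i j => φ j (v i)).det ≠ 0) : LinearIndependent R v :=
  (Matrix.linearIndependent_rows_of_det_ne_zero h).of_comp (LinearMap.pi φ)

theorem eq_zero_of_self_eq_neg (K : Type*) {V : Type*} [Field K] [NeZero (2 : K)]
    [AddCommGroup V] [Module K V] {v : V} (h : v = -v) : v = 0 := by
  have h2 : (2 : K) • v = 0 := by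
    rw [two_smul]
    nth_rewrite 2 [h]
    exact add_neg_cancel v
  simpa [two_ne_zero] using h2

section

variable {K V : Type*} [Field K] [AddCommGroup V] [Module K V]

theorem LinearMap.exists_eq_fixed_add_anti [NeZero (2 : K)] {τ : V →ₗ[K] V}
    (hτ : Function.Involutive τ) (x : V) :
    ∃ a b, τ a = a ∧ τ b = -b ∧ a + b = x := by
  refine ⟨(2⁻¹ : K) • (x + τ x), (2⁻¹ : K) • (x - τ x), ?_, ?_, ?_⟩
  · rw [map_smul, map_add, hτ, add_comm]
  · rw [map_smul, map_sub, hτ, ← smul_neg, neg_sub]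
  · rw [← smul_add, add_add_sub_cancel, ← two_smul K, smul_smul,
      inv_mul_cancel₀ two_ne_zero, one_smul]

def torsionSupport (T : V →ₗ[K] V →ₗ[K] V) : Submodule K V :=
  Submodule.span K {w | ∃ X Y : V, T X Y = w}

structure IsTotallySkew (B : V →ₗ[K] V →ₗ[K] K) (T : V →ₗ[K] V →ₗ[K] V) : Prop where
  swap₁₂ : ∀ X Y Z, B (T X Y) Z = -B (T Y X) Z
  swap₂₃ : ∀ X Y Z, B (T X Y) Z = -B (T X Z) Y

structure IsAdaptedParaComplex (B : V →ₗ[K] V →ₗ[K] K) (T : V →ₗ[K] V →ₗ[K] V)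
    (τ : V →ₗ[K] V) : Prop where
  involutive : Function.Involutive τ
  anti_isometry : ∀ x y, B (τ x) (τ y) = -B x y
  anticomm : ∀ X Y, T X (τ Y) = -τ (T X Y)

variable {B : V →ₗ[K] V →ₗ[K] K} {T : V →ₗ[K] V →ₗ[K] V} {τ : V →ₗ[K] V}

namespace IsTotallySkew

theorem apply_self_right [NeZero (2 : K)] (hT : IsTotallySkew B T) (X Y : V) : B (T X Y) Y = 0 :=
  eq_zero_of_self_eq_neg K (hT.swap₂₃ X Y Y)

theorem apply_self_left [NeZero (2 : K)] (hT : IsTotallySkew B T) (X Y : V) : B (T X Y) X = 0 := by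
  rw [hT.swap₁₂, hT.apply_self_right, neg_zero]

theorem cycle (hT : IsTotallySkew B T) (X Y Z : V) : B (T X Y) Z = B (T Y Z) X := by
  rw [hT.swap₁₂, hT.swap₂₃, neg_neg]

theorem linearIndependent_of_apply_ne_zero [NeZero (2 : K)] (hT : IsTotallySkew B T)
    (hTT : ∀ a b c d, B (T a b) (T c d) = 0) {x y z u w s : V}
    (hxyz : B (T x y) z ≠ 0) (huws : B (T u w) s ≠ 0) :
    LinearIndependent K ![x, y, z, T u w, T w s, T s u] := by
  refine linearIndependent_of_det_apply_ne_zero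
    ![B (T y z), B (T z x), B (T x y), B.flip s, B.flip u, B.flip w] ?_
  rw [Matrix.det_of_isUpperTriangular]
  · simp [Fin.prod_univ_succ, ← hT.cycle, hxyz, huws]
  · intro i j hji
    fin_cases i <;> fin_cases j <;> first
      | exact absurd hji (by decide)
      | simp [hT.apply_self_left, hT.apply_self_right, hTT]

end IsTotallySkew

namespace IsAdaptedParaComplex

theorem neg (hτ : IsAdaptedParaComplex B T τ) : IsAdaptedParaComplex B T (-τ) where
  involutive x := by simp [hτ.involutive x]
  anti_isometry x y := by simp [hτ.anti_isometry]
  anticomm X Y := by simp [hτ.anticomm]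

theorem apply_eq_zero_of_fixed [NeZero (2 : K)] (hτ : IsAdaptedParaComplex B T τ) {a b : V}
    (ha : τ a = a) (hb : τ b = b) : B a b = 0 :=
  eq_zero_of_self_eq_neg K (by simpa [ha, hb] using hτ.anti_isometry a b)

theorem apply_T_eq_neg_of_fixed (hτ : IsAdaptedParaComplex B T τ) (X : V) {Y : V}
    (hY : τ Y = Y) : τ (T X Y) = -T X Y := by
  rw [← neg_eq_iff_eq_neg, ← hτ.anticomm, hY]

theorem apply_eq_zero_of_anti [NeZero (2 : K)] (hτ : IsAdaptedParaComplex B T τ) {a b : V}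
    (ha : τ a = -a) (hb : τ b = -b) : B a b = 0 :=
  hτ.neg.apply_eq_zero_of_fixed (by simp [ha]) (by simp [hb])

theorem apply_T_eq_self_of_anti (hτ : IsAdaptedParaComplex B T τ) (X : V) {Y : V}
    (hY : τ Y = -Y) : τ (T X Y) = T X Y := by
  simpa using hτ.neg.apply_T_eq_neg_of_fixed X (Y := Y) (by simp [hY])

/-- `T X Y` pairs to zero with both eigencomponents of any `Z`: each pairing is, up to sign,
a pairing inside one isotropic eigenspace. -/
theorem T_eq_zero_of_fixed_of_anti [NeZero (2 : K)] (hBnd : ∀ x, (∀ y, B x y = 0) → x = 0)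
    (hT : IsTotallySkew B T) (hτ : IsAdaptedParaComplex B T τ) {X Y : V}
    (hX : τ X = X) (hY : τ Y = -Y) : T X Y = 0 := by
  refine hBnd _ fun Z => ?_
  obtain ⟨a, b, ha, hb, rfl⟩ := τ.exists_eq_fixed_add_anti hτ.involutive Z
  rw [map_add, hT.swap₂₃, hT.cycle X Y b,
    hτ.apply_eq_zero_of_anti (hτ.apply_T_eq_neg_of_fixed X ha) hY,
    hτ.apply_eq_zero_of_fixed (hτ.apply_T_eq_self_of_anti Y hb) hX, neg_zero, add_zero]

theorem T_eq_zero_of_anti_of_fixed [NeZero (2 : K)] (hBnd : ∀ x, (∀ y, B x y = 0) → x = 0)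
    (hT : IsTotallySkew B T) (hτ : IsAdaptedParaComplex B T τ) {X Y : V}
    (hX : τ X = -X) (hY : τ Y = Y) : T X Y = 0 :=
  hτ.neg.T_eq_zero_of_fixed_of_anti hBnd hT (by simp [hX]) (by simp [hY])

theorem torsionSupport_le_eigenspace_one [NeZero (2 : K)]
    (hBnd : ∀ x, (∀ y, B x y = 0) → x = 0) (hT : IsTotallySkew B T)
    (hτ : IsAdaptedParaComplex B T τ) (h : ∀ x y, τ x = x → τ y = y → T x y = 0) :
    torsionSupport T ≤ eigenspace τ 1 := by
  refine Submodule.span_le.mpr ?_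
  rintro _ ⟨X, Y, rfl⟩
  obtain ⟨a, b, ha, hb, rfl⟩ := τ.exists_eq_fixed_add_anti hτ.involutive X
  obtain ⟨c, d, hc, hd, rfl⟩ := τ.exists_eq_fixed_add_anti hτ.involutive Y
  rw [SetLike.mem_coe, mem_eigenspace_iff, one_smul]
  simp only [map_add, LinearMap.add_apply, h a c ha hc, T_eq_zero_of_fixed_of_anti hBnd hT hτ ha hd,
    T_eq_zero_of_anti_of_fixed hBnd hT hτ hb hc, zero_add]
  exact hτ.apply_T_eq_self_of_anti b hd

theorem exists_fixed_apply_ne_zero [NeZero (2 : K)] (hBnd : ∀ x, (∀ y, B x y = 0) → x = 0)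
    (hτ : IsAdaptedParaComplex B T τ) {v : V} (hv : τ v = -v) (hv0 : v ≠ 0) :
    ∃ z, τ z = z ∧ B v z ≠ 0 := by
  obtain ⟨z, hvz⟩ : ∃ z, B v z ≠ 0 := by
    by_contra! h
    exact hv0 (hBnd v h)
  obtain ⟨a, b, ha, hb, rfl⟩ := τ.exists_eq_fixed_add_anti hτ.involutive z
  refine ⟨a, ha, ?_⟩
  rwa [map_add, hτ.apply_eq_zero_of_anti hv hb, add_zero] at hvz

theorem exists_fixed_apply_T_ne_zero [NeZero (2 : K)] (hBnd : ∀ x, (∀ y, B x y = 0) → x = 0)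
    (hT : IsTotallySkew B T) (hτ : IsAdaptedParaComplex B T τ)
    (h : ¬ torsionSupport T ≤ eigenspace τ 1) :
    ∃ x y z, τ x = x ∧ τ y = y ∧ τ z = z ∧ B (T x y) z ≠ 0 := by
  obtain ⟨x, y, hx, hy, hxy⟩ : ∃ x y, τ x = x ∧ τ y = y ∧ T x y ≠ 0 := by
    by_contra! h'
    exact h (hτ.torsionSupport_le_eigenspace_one hBnd hT h')
  obtain ⟨z, hz, hxyz⟩ := hτ.exists_fixed_apply_ne_zero hBnd (hτ.apply_T_eq_neg_of_fixed x hy) hxy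
  exact ⟨x, y, z, hx, hy, hz, hxyz⟩

theorem six_le_finrank_eigenspace_one [NeZero (2 : K)] [FiniteDimensional K V]
    (hBnd : ∀ x, (∀ y, B x y = 0) → x = 0) (hT : IsTotallySkew B T)
    (hτ : IsAdaptedParaComplex B T τ) (hTT : ∀ a b c d, B (T a b) (T c d) = 0)
    (hpos : ¬ torsionSupport T ≤ eigenspace τ 1) (hneg : ¬ torsionSupport T ≤ eigenspace (-τ) 1) :
    6 ≤ finrank K (eigenspace τ 1) := by
  obtain ⟨x, y, z, hx, hy, hz, hxyz⟩ := hτ.exists_fixed_apply_T_ne_zero hBnd hT hpos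
  obtain ⟨u, w, s, hu, hw, hs, huws⟩ := hτ.neg.exists_fixed_apply_T_ne_zero hBnd hT hneg
  have hfixed : ∀ {X Y : V}, (-τ) Y = Y → τ (T X Y) = T X Y := fun hY => by
    simpa using hτ.neg.apply_T_eq_neg_of_fixed _ hY
  have hspan : Submodule.span K (Set.range ![x, y, z, T u w, T w s, T s u]) ≤ eigenspace τ 1 := by
    refine Submodule.span_le.mpr ?_
    rintro _ ⟨i, rfl⟩
    rw [SetLike.mem_coe, mem_eigenspace_iff, one_smul]
    fin_cases i
    exacts [hx, hy, hz, hfixed hw, hfixed hs, hfixed hu]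
  calc 6 = finrank K (Submodule.span K (Set.range ![x, y, z, T u w, T w s, T s u])) := by
        rw [finrank_span_eq_card (hT.linearIndependent_of_apply_ne_zero hTT hxyz huws),
          Fintype.card_fin]
    _ ≤ finrank K (eigenspace τ 1) := Submodule.finrank_mono hspan

theorem twelve_le_finrank [NeZero (2 : K)] [FiniteDimensional K V]
    (hBnd : ∀ x, (∀ y, B x y = 0) → x = 0) (hT : IsTotallySkew B T)
    (hτ : IsAdaptedParaComplex B T τ) (hTT : ∀ a b c d, B (T a b) (T c d) = 0)
    (hpos : ¬ torsionSupport T ≤ eigenspace τ 1) (hneg : ¬ torsionSupport T ≤ eigenspace (-τ) 1) :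
    12 ≤ finrank K V := by
  have hdisj : Disjoint (eigenspace τ 1) (eigenspace (-τ) 1) := by
    refine Submodule.disjoint_def.mpr fun v h₁ h₂ => eq_zero_of_self_eq_neg K ?_
    rw [mem_eigenspace_iff, one_smul] at h₁ h₂
    rw [LinearMap.neg_apply, h₁] at h₂
    exact h₂.symm
  have h₁ := hτ.six_le_finrank_eigenspace_one hBnd hT hTT hpos hneg
  have h₂ := hτ.neg.six_le_finrank_eigenspace_one hBnd hT hTT hneg (by rwa [neg_neg])
  have := Submodule.finrank_add_finrank_le_of_disjoint hdisj
  omega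

end IsAdaptedParaComplex

end

theorem support_in_eigenspace_of_small_dim_general
    {V : Type*} [AddCommGroup V] [Module ℝ V] [FiniteDimensional ℝ V]
    (B : V →ₗ[ℝ] V →ₗ[ℝ] ℝ)
    (hBnd : ∀ x : V, (∀ y : V, B x y = 0) → x = 0)
    (T : V →ₗ[ℝ] V →ₗ[ℝ] V)
    (halt₁ : ∀ X Y Z : V, B (T X Y) Z = - B (T Y X) Z)
    (halt₂ : ∀ X Y Z : V, B (T X Y) Z = - B (T X Z) Y)
    (τ : V →ₗ[ℝ] V)
    (hτ2 : τ ∘ₗ τ = LinearMap.id)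
    (hτB : ∀ x y : V, B (τ x) (τ y) = - B x y)
    (hiso : ∀ u ∈ Submodule.span ℝ {w : V | ∃ X Y : V, T X Y = w},
      ∀ v ∈ Submodule.span ℝ {w : V | ∃ X Y : V, T X Y = w}, B u v = 0)
    (hanti : ∀ X : V, (T X) ∘ₗ τ + τ ∘ₗ (T X) = 0)
    (hdim : Module.finrank ℝ V < 12) :
    (∀ v ∈ Submodule.span ℝ {w : V | ∃ X Y : V, T X Y = w}, τ v = v) ∨
    (∀ v ∈ Submodule.span ℝ {w : V | ∃ X Y : V, T X Y = w}, τ v = -v) := by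
  have hτ : IsAdaptedParaComplex B T τ :=
    { involutive := fun x => congr($hτ2 x)
      anti_isometry := hτB
      anticomm := fun X Y => eq_neg_of_add_eq_zero_left congr($(hanti X) Y) }
  have hTT : ∀ a b c d, B (T a b) (T c d) = 0 := fun a b c d =>
    hiso _ (Submodule.subset_span ⟨a, b, rfl⟩) _ (Submodule.subset_span ⟨c, d, rfl⟩)
  by_contra! h
  obtain ⟨⟨v, hv, hτv⟩, w, hw, hτw⟩ := h
  have := hτ.twelve_le_finrank hBnd ⟨halt₁, halt₂⟩ hTT
    (fun hle => hτv (by simpa using hle hv))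
    (fun hle => hτw (by simpa [neg_eq_iff_eq_neg] using hle hw))
  omega

/-- If `τ` is a para-complex structure compatible with `B`, the support
`Σ_T` is isotropic, `T X ∘ τ + τ ∘ T X = 0` for all `X`, and `dim V < 12`, then
`Σ_T` is contained in one of the two eigenspaces of `τ`. -/
theorem support_in_eigenspace_of_small_dim
    {V : Type*} [AddCommGroup V] [Module ℝ V] [FiniteDimensional ℝ V]
    (B : V →ₗ[ℝ] V →ₗ[ℝ] ℝ)
    (hBsymm : ∀ x y : V, B x y = B y x)
    (hBnd : ∀ x : V, (∀ y : V, B x y = 0) → x = 0)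
    (T : V →ₗ[ℝ] V →ₗ[ℝ] V)
    (halt₁ : ∀ X Y Z : V, B (T X Y) Z = - B (T Y X) Z)
    (halt₂ : ∀ X Y Z : V, B (T X Y) Z = - B (T X Z) Y)
    (halt₃ : ∀ X Y Z : V, B (T X Y) Z = - B (T Z Y) X)
    (τ : V →ₗ[ℝ] V)
    (hτ2 : τ ∘ₗ τ = LinearMap.id)
    (hτB : ∀ x y : V, B (τ x) (τ y) = - B x y)
    (hiso : ∀ u ∈ Submodule.span ℝ {w : V | ∃ X Y : V, T X Y = w},
      ∀ v ∈ Submodule.span ℝ {w : V | ∃ X Y : V, T X Y = w}, B u v = 0)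
    (hanti : ∀ X : V, (T X) ∘ₗ τ + τ ∘ₗ (T X) = 0)
    (hdim : Module.finrank ℝ V < 12) :
    (∀ v ∈ Submodule.span ℝ {w : V | ∃ X Y : V, T X Y = w}, τ v = v) ∨
    (∀ v ∈ Submodule.span ℝ {w : V | ∃ X Y : V, T X Y = w}, τ v = -v) :=
  support_in_eigenspace_of_small_dim_general B hBnd T halt₁ halt₂ τ hτ2 hτB hiso hanti hdim
end

section
/- Let τ be a para-complex structure compatible with B, and assume T X ∘ T Y = 0 and T X ∘ τ + τ ∘ T X = 0 for all X, Y ∈ V. For each x ∈ V define J_x := (id + 2 T x) ∘ τ ∈ End(V). Then for all x, X, Y, u, v ∈ V: (a) J_x ∘ J_x = id; (b) B(J_x u, J_x v) = −B(u,v); (c) T X ∘ J_x + J_x ∘ T X = 0; (d) 2 (T X) ∘ τ = −2 J_x ∘ T X (so the x-derivative of x ↦ J_x in direction X, which is the constant 2 T X ∘ τ, equals −2 J_x ∘ T X); and (e) T X (τ Y) + T Y (τ X) = 0 (the nearly para-Kähler skew-symmetry condition). -/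
/-- Let `τ` be a para-complex structure compatible with `B` and assume
`T X ∘ T Y = 0` and `T X ∘ τ + τ ∘ T X = 0` for all `X, Y`. For `J_x := (id + 2 T x) ∘ τ`:
(a) `J_x² = id`; (b) `B(J_x u, J_x v) = −B(u,v)`; (c) `T X ∘ J_x + J_x ∘ T X = 0`;
(d) `2 T X ∘ τ = −2 J_x ∘ T X`; (e) `T X (τ Y) + T Y (τ X) = 0`. -/
theorem para_complex_field_properties
    {V : Type*} [AddCommGroup V] [Module ℝ V] [FiniteDimensional ℝ V]
    (B : V →ₗ[ℝ] V →ₗ[ℝ] ℝ)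
    (hBsymm : ∀ x y : V, B x y = B y x)
    (hBnd : ∀ x : V, (∀ y : V, B x y = 0) → x = 0)
    (T : V →ₗ[ℝ] V →ₗ[ℝ] V)
    (halt₁ : ∀ X Y Z : V, B (T X Y) Z = - B (T Y X) Z)
    (halt₂ : ∀ X Y Z : V, B (T X Y) Z = - B (T X Z) Y)
    (halt₃ : ∀ X Y Z : V, B (T X Y) Z = - B (T Z Y) X)
    (τ : V →ₗ[ℝ] V)
    (hτ2 : τ ∘ₗ τ = LinearMap.id)
    (hτB : ∀ x y : V, B (τ x) (τ y) = - B x y)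
    (hT0 : ∀ X Y : V, (T X) ∘ₗ (T Y) = 0)
    (hanti : ∀ X : V, (T X) ∘ₗ τ + τ ∘ₗ (T X) = 0) :
    let J : V → (V →ₗ[ℝ] V) := fun x => (LinearMap.id + (2 : ℝ) • T x) ∘ₗ τ
    -- (a) J_x is an almost para-complex structure
    (∀ x : V, (J x) ∘ₗ (J x) = LinearMap.id) ∧
    -- (b) J_x is compatible with B
    (∀ x u v : V, B (J x u) (J x v) = - B u v) ∧
    -- (c) T X anticommutes with J_x
    (∀ x X : V, (T X) ∘ₗ (J x) + (J x) ∘ₗ (T X) = 0) ∧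
    -- (d) the derivative of x ↦ J_x in direction X equals −2 J_x ∘ T X
    (∀ x X : V, (2 : ℝ) • ((T X) ∘ₗ τ) = -((2 : ℝ) • ((J x) ∘ₗ (T X)))) ∧
    -- (e) the nearly para-Kähler skew-symmetry condition
    (∀ X Y : V, T X (τ Y) + T Y (τ X) = 0) := by
  have hτ2' : ∀ u : V, τ (τ u) = u := fun u => by
    simpa using LinearMap.congr_fun hτ2 u
  have hanti' : ∀ (X u : V), τ (T X u) = - T X (τ u) := fun X u => by
    have h := LinearMap.congr_fun (hanti X) u
    simp only [LinearMap.add_apply, LinearMap.comp_apply, LinearMap.zero_apply] at h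
    exact eq_neg_of_add_eq_zero_right h
  have hT0' : ∀ (X Y u : V), T X (T Y u) = 0 := fun X Y u => by
    simpa using LinearMap.congr_fun (hT0 X Y) u
  have hskew : ∀ (x a b : V), B (T x a) b = - B a (T x b) := fun x a b => by
    rw [halt₂, hBsymm]
  have hTanti : ∀ X Y : V, T X Y + T Y X = 0 := fun X Y => by
    apply hBnd
    intro Z
    simp only [map_add, LinearMap.add_apply]
    rw [halt₁ X Y Z]
    ring
  intro J
  have hJapp : ∀ x u : V, J x u = τ u + (2:ℝ) • T x (τ u) := fun x u => by
    simp [J, LinearMap.comp_apply, LinearMap.add_apply]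
  refine ⟨?_, ?_, ?_, ?_, ?_⟩
  · intro x
    ext u
    simp only [LinearMap.comp_apply, LinearMap.id_apply, hJapp, map_add, map_smul,
      map_neg, hτ2', hanti', hT0', neg_zero, smul_zero, add_zero, smul_neg, neg_neg]
    abel
  · intro x u v
    simp only [hJapp, map_add, map_smul, LinearMap.add_apply, LinearMap.smul_apply,
      smul_eq_mul]
    have h1 : B (T x (τ u)) (τ v) = - B (τ u) (T x (τ v)) := hskew x _ _
    have h2 : B (T x (τ u)) (T x (τ v)) = 0 := by
      rw [hskew x (τ u), hT0']
      simp
    rw [hτB]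
    linarith [h1, h2]
  · intro x X
    ext u
    simp only [LinearMap.add_apply, LinearMap.comp_apply, LinearMap.zero_apply,
      hJapp, map_add, map_smul, map_neg, hanti', hT0', neg_zero, smul_zero,
      add_zero, smul_neg, neg_neg]
    abel
  · intro x X
    ext u
    simp only [LinearMap.comp_apply, LinearMap.smul_apply, LinearMap.neg_apply,
      hJapp, map_add, map_smul, map_neg, hanti', hT0', neg_zero, smul_zero,
      add_zero, smul_neg, neg_neg]
  · intro X Y
    have h1 : τ (T X Y) + τ (T Y X) = 0 := by
      rw [← map_add, hTanti X Y, map_zero]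
    rw [hanti' X Y, hanti' Y X, ← neg_add, neg_eq_zero] at h1
    exact h1
end

section
/- There exist a 12-dimensional real vector space V with a nondegenerate symmetric bilinear form B, a para-complex structure τ compatible with B, and a nonzero linear map T : V → End(V) whose associated trilinear form η(X,Y,Z) := B(T X Y, Z) is alternating, such that the support Σ_T is isotropic, T X ∘ τ + τ ∘ T X = 0 for all X ∈ V, and Σ_T is contained in neither eigenspace of τ (Σ_T ⊄ {x : τx = x} and Σ_T ⊄ {x : τx = −x}). Hence the bound dim V < 12 in the eigenspace-containment result is sharp. -/
set_option linter.unreachableTactic false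
set_option linter.unusedTactic false

@[simp] lemma finval0 : ((0:Fin 12):ℕ) = 0 := rfl
@[simp] lemma finval1 : ((1:Fin 12):ℕ) = 1 := rfl
@[simp] lemma finval2 : ((2:Fin 12):ℕ) = 2 := rfl
@[simp] lemma finval3 : ((3:Fin 12):ℕ) = 3 := rfl
@[simp] lemma finval4 : ((4:Fin 12):ℕ) = 4 := rfl
@[simp] lemma finval5 : ((5:Fin 12):ℕ) = 5 := rfl
@[simp] lemma finval6 : ((6:Fin 12):ℕ) = 6 := rfl
@[simp] lemma finval7 : ((7:Fin 12):ℕ) = 7 := rfl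
@[simp] lemma finval8 : ((8:Fin 12):ℕ) = 8 := rfl
@[simp] lemma finval9 : ((9:Fin 12):ℕ) = 9 := rfl
@[simp] lemma finval10 : ((10:Fin 12):ℕ) = 10 := rfl
@[simp] lemma finval11 : ((11:Fin 12):ℕ) = 11 := rfl

noncomputable def myB : (Fin 12 → ℝ) →ₗ[ℝ] (Fin 12 → ℝ) →ₗ[ℝ] ℝ :=
  LinearMap.mk₂ ℝ (fun x y =>
    x 0*y 6 + x 1*y 7 + x 2*y 8 + x 3*y 9 + x 4*y 10 + x 5*y 11
      + x 6*y 0 + x 7*y 1 + x 8*y 2 + x 9*y 3 + x 10*y 4 + x 11*y 5)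
    (by intros; simp only [Pi.add_apply]; ring)
    (by intros; simp only [Pi.smul_apply, smul_eq_mul]; ring)
    (by intros; simp only [Pi.add_apply]; ring)
    (by intros; simp only [Pi.smul_apply, smul_eq_mul]; ring)

lemma myB_apply (x y : Fin 12 → ℝ) : myB x y =
    x 0*y 6 + x 1*y 7 + x 2*y 8 + x 3*y 9 + x 4*y 10 + x 5*y 11
      + x 6*y 0 + x 7*y 1 + x 8*y 2 + x 9*y 3 + x 10*y 4 + x 11*y 5 := rfl

noncomputable def myTau : (Fin 12 → ℝ) →ₗ[ℝ] (Fin 12 → ℝ) where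
  toFun x := fun i => if (i:ℕ) < 6 then x i else - x i
  map_add' x y := by funext i; simp only [Pi.add_apply]; split_ifs <;> ring
  map_smul' c x := by
    funext i; simp only [Pi.smul_apply, smul_eq_mul, RingHom.id_apply]; split_ifs <;> ring

lemma myTau_apply (x : Fin 12 → ℝ) (i : Fin 12) :
    myTau x i = if (i:ℕ) < 6 then x i else - x i := rfl

lemma myTau_eval (x : Fin 12 → ℝ) :
    myTau x 0 = x 0 ∧ myTau x 1 = x 1 ∧ myTau x 2 = x 2 ∧
    myTau x 3 = x 3 ∧ myTau x 4 = x 4 ∧ myTau x 5 = x 5 ∧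
    myTau x 6 = - x 6 ∧ myTau x 7 = - x 7 ∧ myTau x 8 = - x 8 ∧
    myTau x 9 = - x 9 ∧ myTau x 10 = - x 10 ∧ myTau x 11 = - x 11 := by
  refine ⟨?_,?_,?_,?_,?_,?_,?_,?_,?_,?_,?_,?_⟩ <;>
    (rw [myTau_apply]; first | rw [if_pos (by decide)] | rw [if_neg (by decide)])

def tfun (X Y : Fin 12 → ℝ) : Fin 12 → ℝ := fun i =>
  if i = 3 then X 10 * Y 11 - X 11 * Y 10
  else if i = 4 then X 11 * Y 9 - X 9 * Y 11
  else if i = 5 then X 9 * Y 10 - X 10 * Y 9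
  else if i = 6 then X 1 * Y 2 - X 2 * Y 1
  else if i = 7 then X 2 * Y 0 - X 0 * Y 2
  else if i = 8 then X 0 * Y 1 - X 1 * Y 0
  else 0

noncomputable def myT : (Fin 12 → ℝ) →ₗ[ℝ] (Fin 12 → ℝ) →ₗ[ℝ] (Fin 12 → ℝ) :=
  LinearMap.mk₂ ℝ tfun
    (by intros x x' y; funext i; simp only [tfun, Pi.add_apply]; split_ifs <;> ring)
    (by intros c x y; funext i; simp only [tfun, Pi.smul_apply, smul_eq_mul]; split_ifs <;> ring)
    (by intros x y y'; funext i; simp only [tfun, Pi.add_apply]; split_ifs <;> ring)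
    (by intros c x y; funext i; simp only [tfun, Pi.smul_apply, smul_eq_mul]; split_ifs <;> ring)

lemma myT_apply (X Y : Fin 12 → ℝ) : myT X Y = tfun X Y := rfl

lemma tfun_eval (X Y : Fin 12 → ℝ) :
    tfun X Y 0 = 0 ∧ tfun X Y 1 = 0 ∧ tfun X Y 2 = 0 ∧
    tfun X Y 3 = X 10 * Y 11 - X 11 * Y 10 ∧
    tfun X Y 4 = X 11 * Y 9 - X 9 * Y 11 ∧
    tfun X Y 5 = X 9 * Y 10 - X 10 * Y 9 ∧
    tfun X Y 6 = X 1 * Y 2 - X 2 * Y 1 ∧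
    tfun X Y 7 = X 2 * Y 0 - X 0 * Y 2 ∧
    tfun X Y 8 = X 0 * Y 1 - X 1 * Y 0 ∧
    tfun X Y 9 = 0 ∧ tfun X Y 10 = 0 ∧ tfun X Y 11 = 0 := by
  refine ⟨?_,?_,?_,?_,?_,?_,?_,?_,?_,?_,?_,?_⟩ <;>
    (simp only [tfun]; split_ifs <;>
      first | (exact absurd ‹_› (by decide)) | (exact absurd (by decide) ‹_›) | ring1)

/-- elements of the support vanish at coordinates 0,1,2,9,10,11 -/
lemma support_coords {v : Fin 12 → ℝ}
    (hv : v ∈ Submodule.span ℝ {w : Fin 12 → ℝ | ∃ X Y : Fin 12 → ℝ, myT X Y = w}) :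
    v 0 = 0 ∧ v 1 = 0 ∧ v 2 = 0 ∧ v 9 = 0 ∧ v 10 = 0 ∧ v 11 = 0 := by
  induction hv using Submodule.span_induction with
  | mem w hw =>
    obtain ⟨X, Y, rfl⟩ := hw
    rw [myT_apply]
    obtain ⟨h0, h1, h2, _, _, _, _, _, _, h9, h10, h11⟩ := tfun_eval X Y
    exact ⟨h0, h1, h2, h9, h10, h11⟩
  | zero => simp
  | add x y hx hy ihx ihy =>
    obtain ⟨a0, a1, a2, a9, a10, a11⟩ := ihx
    obtain ⟨b0, b1, b2, b9, b10, b11⟩ := ihy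
    simp [a0, a1, a2, a9, a10, a11, b0, b1, b2, b9, b10, b11]
  | smul c x hx ihx =>
    obtain ⟨a0, a1, a2, a9, a10, a11⟩ := ihx
    simp [a0, a1, a2, a9, a10, a11]

set_option maxHeartbeats 2000000 in
/-- On a 12-dimensional real vector space (here `ℝ¹² = Fin 12 → ℝ`)
there exist a nondegenerate symmetric bilinear form `B`, a compatible para-complex
structure `τ`, and a nonzero `T` with alternating associated 3-form, isotropic
support, anticommuting with `τ`, whose support is contained in neither eigenspace
of `τ`. Hence the bound `dim V < 12` in the eigenspace-containment result is sharp. -/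
theorem exists_twelve_dim_support_in_neither_eigenspace :
    ∃ (B : (Fin 12 → ℝ) →ₗ[ℝ] (Fin 12 → ℝ) →ₗ[ℝ] ℝ)
      (τ : (Fin 12 → ℝ) →ₗ[ℝ] (Fin 12 → ℝ))
      (T : (Fin 12 → ℝ) →ₗ[ℝ] (Fin 12 → ℝ) →ₗ[ℝ] (Fin 12 → ℝ)),
      -- B is symmetric and nondegenerate
      (∀ x y : Fin 12 → ℝ, B x y = B y x) ∧
      (∀ x : Fin 12 → ℝ, (∀ y : Fin 12 → ℝ, B x y = 0) → x = 0) ∧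
      -- τ is a para-complex structure compatible with B
      (τ ∘ₗ τ = LinearMap.id) ∧
      (∀ x y : Fin 12 → ℝ, B (τ x) (τ y) = - B x y) ∧
      -- T is nonzero with alternating associated 3-form
      T ≠ 0 ∧
      (∀ X Y Z : Fin 12 → ℝ, B (T X Y) Z = - B (T Y X) Z) ∧
      (∀ X Y Z : Fin 12 → ℝ, B (T X Y) Z = - B (T X Z) Y) ∧
      -- the support is isotropic
      (∀ u ∈ Submodule.span ℝ {w : Fin 12 → ℝ | ∃ X Y : Fin 12 → ℝ, T X Y = w},
        ∀ v ∈ Submodule.span ℝ {w : Fin 12 → ℝ | ∃ X Y : Fin 12 → ℝ, T X Y = w},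
          B u v = 0) ∧
      -- T anticommutes with τ
      (∀ X : Fin 12 → ℝ, (T X) ∘ₗ τ + τ ∘ₗ (T X) = 0) ∧
      -- the support is contained in neither eigenspace of τ
      (∃ v ∈ Submodule.span ℝ {w : Fin 12 → ℝ | ∃ X Y : Fin 12 → ℝ, T X Y = w},
        τ v ≠ v) ∧
      (∃ v ∈ Submodule.span ℝ {w : Fin 12 → ℝ | ∃ X Y : Fin 12 → ℝ, T X Y = w},
        τ v ≠ -v) := by
  refine ⟨myB, myTau, myT, ?_, ?_, ?_, ?_, ?_, ?_, ?_, ?_, ?_, ?_, ?_⟩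
  · -- symmetric
    intro x y; rw [myB_apply, myB_apply]; ring
  · -- nondegenerate
    intro x h
    have h0 := h (Pi.single 6 1); rw [myB_apply] at h0
    have h1 := h (Pi.single 7 1); rw [myB_apply] at h1
    have h2 := h (Pi.single 8 1); rw [myB_apply] at h2
    have h3 := h (Pi.single 9 1); rw [myB_apply] at h3
    have h4 := h (Pi.single 10 1); rw [myB_apply] at h4
    have h5 := h (Pi.single 11 1); rw [myB_apply] at h5
    have h6 := h (Pi.single 0 1); rw [myB_apply] at h6
    have h7 := h (Pi.single 1 1); rw [myB_apply] at h7
    have h8 := h (Pi.single 2 1); rw [myB_apply] at h8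
    have h9 := h (Pi.single 3 1); rw [myB_apply] at h9
    have h10 := h (Pi.single 4 1); rw [myB_apply] at h10
    have h11 := h (Pi.single 5 1); rw [myB_apply] at h11
    simp only [Pi.single_apply] at h0 h1 h2 h3 h4 h5 h6 h7 h8 h9 h10 h11
    norm_num [Fin.ext_iff] at h0 h1 h2 h3 h4 h5 h6 h7 h8 h9 h10 h11
    funext i
    fin_cases i <;> simp [h0, h1, h2, h3, h4, h5, h6, h7, h8, h9, h10, h11]
  · -- τ ∘ τ = id
    apply LinearMap.ext; intro x
    funext i
    simp only [LinearMap.comp_apply, LinearMap.id_apply, myTau_apply]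
    split_ifs <;> ring
  · -- compatibility
    intro x y
    obtain ⟨a0,a1,a2,a3,a4,a5,a6,a7,a8,a9,a10,a11⟩ := myTau_eval x
    obtain ⟨b0,b1,b2,b3,b4,b5,b6,b7,b8,b9,b10,b11⟩ := myTau_eval y
    rw [myB_apply, myB_apply, a0,a1,a2,a3,a4,a5,a6,a7,a8,a9,a10,a11,
      b0,b1,b2,b3,b4,b5,b6,b7,b8,b9,b10,b11]
    ring
  · -- T ≠ 0
    intro h
    have h1 : myT (Pi.single 0 1) (Pi.single 1 1) 8 = 1 := by
      rw [myT_apply]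
      obtain ⟨_, _, _, _, _, _, _, _, h8, _, _, _⟩ :=
        tfun_eval (Pi.single (0:Fin 12) (1:ℝ)) (Pi.single 1 1)
      rw [h8]
      norm_num [Pi.single_apply, Fin.ext_iff]
    rw [h] at h1
    simp at h1
  · -- antisymmetry in first two slots
    intro X Y Z
    rw [myB_apply, myB_apply]
    obtain ⟨a0, a1, a2, a3, a4, a5, a6, a7, a8, a9, a10, a11⟩ := tfun_eval X Y
    obtain ⟨b0, b1, b2, b3, b4, b5, b6, b7, b8, b9, b10, b11⟩ := tfun_eval Y X
    rw [myT_apply, myT_apply, a0, a1, a2, a3, a4, a5, a6, a7, a8, a9, a10, a11,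
      b0, b1, b2, b3, b4, b5, b6, b7, b8, b9, b10, b11]
    ring
  · -- antisymmetry in last two slots
    intro X Y Z
    rw [myB_apply, myB_apply]
    obtain ⟨a0, a1, a2, a3, a4, a5, a6, a7, a8, a9, a10, a11⟩ := tfun_eval X Y
    obtain ⟨b0, b1, b2, b3, b4, b5, b6, b7, b8, b9, b10, b11⟩ := tfun_eval X Z
    rw [myT_apply, myT_apply, a0, a1, a2, a3, a4, a5, a6, a7, a8, a9, a10, a11,
      b0, b1, b2, b3, b4, b5, b6, b7, b8, b9, b10, b11]
    ring
  · -- isotropy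
    intro u hu v hv
    obtain ⟨a0, a1, a2, a9, a10, a11⟩ := support_coords hu
    obtain ⟨b0, b1, b2, b9, b10, b11⟩ := support_coords hv
    rw [myB_apply, a0, a1, a2, a9, a10, a11, b0, b1, b2, b9, b10, b11]
    ring
  · -- anticommutation
    intro X
    apply LinearMap.ext; intro Y
    simp only [LinearMap.add_apply, LinearMap.comp_apply, LinearMap.zero_apply]
    funext i
    simp only [Pi.add_apply, Pi.zero_apply, myT_apply]
    obtain ⟨iv, hiv⟩ := i
    simp only [tfun, myTau_apply, Fin.ext_iff, finval0, finval1, finval2, finval3,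
      finval4, finval5, finval6, finval7, finval8, finval9, finval10, finval11]
    norm_num
    split_ifs <;> first | ring1 | (exfalso; omega)
  · -- support not in +1 eigenspace
    refine ⟨myT (Pi.single 0 1) (Pi.single 1 1),
      Submodule.subset_span ⟨_, _, rfl⟩, ?_⟩
    intro h
    have h8 : myT (Pi.single 0 1) (Pi.single 1 1) 8 = 1 := by
      rw [myT_apply]
      obtain ⟨_, _, _, _, _, _, _, _, h8, _, _, _⟩ :=
        tfun_eval (Pi.single (0:Fin 12) (1:ℝ)) (Pi.single 1 1)
      rw [h8]
      norm_num [Pi.single_apply, Fin.ext_iff]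
    have := congrFun h 8
    obtain ⟨_,_,_,_,_,_,_,_,t8,_,_,_⟩ := myTau_eval (myT (Pi.single 0 1) (Pi.single 1 1))
    rw [t8, h8] at this
    norm_num at this
  · -- support not in -1 eigenspace
    refine ⟨myT (Pi.single 9 1) (Pi.single 10 1),
      Submodule.subset_span ⟨_, _, rfl⟩, ?_⟩
    intro h
    have h5 : myT (Pi.single 9 1) (Pi.single 10 1) 5 = 1 := by
      rw [myT_apply]
      obtain ⟨_, _, _, _, _, h5, _, _, _, _, _, _⟩ :=
        tfun_eval (Pi.single (9:Fin 12) (1:ℝ)) (Pi.single 10 1)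
      rw [h5]
      norm_num [Pi.single_apply, Fin.ext_iff]
    have := congrFun h 5
    obtain ⟨_,_,_,_,_,t5,_,_,_,_,_,_⟩ := myTau_eval (myT (Pi.single 9 1) (Pi.single 10 1))
    rw [t5, h5] at this
    simp only [Pi.neg_apply, h5] at this
    norm_num at this
end
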